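/- Additive decomposition into N subproblems: Let i₁, …, i_N, D be nonnegative integers, A a positive integer, and i = Σ_{n=1}^N i_n. Define recursively Δ̃₀ = 0 and (j_n, Δ̃_n) = ds(i_n, D, A, κ_n, Δ̃_{n−1}) for n = 1, …, N, where ds is the direct-search algorithm with correction term. Then j = Σ_{n=1}^N j_n minimizes |k·A − i·D| over all integers k, and Δ̃_N = j·A − i·D. -/

import Mathlib

/-!
Each call of `ds` returns `(k, r)` with `r = k·A − iₙ·D + Δ` and `|r| ≤ A/2`. Chaining the calls,
the correction term telescopes: `Δ̃_N = (∑ jₙ)·A − (∑ iₙ)·D`. Since `|Δ̃_N| ≤ A/2` and every other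
`k·A − i·D` differs from it by a nonzero multiple of `A`, the sum `∑ jₙ` is a minimiser.
-/

/-- Direct-search algorithm with correction term `Δm`. -/
def ds (i D A k₀ Δm : ℤ) : ℤ × ℤ :=
  let Δ₀ := k₀ * A - i * D + Δm
  if Δ₀ = 0 then (k₀, 0)
  else if 0 < Δ₀ then
    let k₁ := k₀ - Δ₀ / A
    let Δ₁ := Δ₀ % A
    if |Δ₁ - A| < |Δ₁| then (k₁ - 1, Δ₁ - A) else (k₁, Δ₁)
  else
    let k₁ := k₀ + |Δ₀| / A
    let Δ₁ := -(|Δ₀| % A)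
    if |Δ₁ + A| < |Δ₁| then (k₁ + 1, Δ₁ + A) else (k₁, Δ₁)

theorem ds_snd_eq (i D A k Δ : ℤ) :
    (ds i D A k Δ).2 = (ds i D A k Δ).1 * A - i * D + Δ := by
  simp only [ds]
  generalize hΔ₀ : k * A - i * D + Δ = Δ₀
  have hdiv := Int.emod_def Δ₀ A
  have hdiv_abs := Int.emod_def |Δ₀| A
  split_ifs <;> grind

/-- The residue `r ∈ [0, A)` and `r - A` satisfy `|r| + |r - A| = A`, and `ds` keeps the smaller. -/
theorem two_mul_abs_ds_snd_le (i D A k Δ : ℤ) (hA : 0 < A) :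
    2 * |(ds i D A k Δ).2| ≤ A := by
  simp only [ds]
  generalize k * A - i * D + Δ = Δ₀
  have hr_nonneg := Int.emod_nonneg Δ₀ hA.ne'
  have hr_lt := Int.emod_lt_of_pos Δ₀ hA
  have hr_abs_nonneg := Int.emod_nonneg |Δ₀| hA.ne'
  have hr_abs_lt := Int.emod_lt_of_pos |Δ₀| hA
  split_ifs <;> grind

theorem abs_le_abs_add_mul_of_two_mul_abs_le {r A : ℤ} (hr : 2 * |r| ≤ A) (m : ℤ) :
    |r| ≤ |r + m * A| := by
  rcases eq_or_ne m 0 with rfl | hm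
  · simp
  have hA : A ≤ |m * A| := by
    rw [abs_mul, abs_of_nonneg (by linarith [abs_nonneg r] : 0 ≤ A)]
    nlinarith [Int.one_le_abs hm, abs_nonneg r]
  have := abs_sub_abs_le_abs_sub (m * A) (-r)
  rw [sub_neg_eq_add, add_comm, abs_neg] at this
  linarith

theorem ds_chain_eq_sum {N : ℕ} {i κ j Δ : ℕ → ℤ} {D A : ℤ} (hΔ0 : Δ 0 = 0)
    (hstep : ∀ n < N, (j n, Δ (n + 1)) = ds (i n) D A (κ n) (Δ n)) :
    ∀ n ≤ N, Δ n = (∑ m ∈ Finset.range n, j m) * A - (∑ m ∈ Finset.range n, i m) * D := by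
  simp only [Prod.ext_iff] at hstep
  intro n hn
  induction n with
  | zero => simpa using hΔ0
  | succ n ih =>
    obtain ⟨hj, hΔ⟩ := hstep n hn
    rw [hΔ, ds_snd_eq, ← hj, ih (by omega), Finset.sum_range_succ, Finset.sum_range_succ]
    ring

theorem stmt_11_general (N : ℕ) (hN : 1 ≤ N) (i κ j : ℕ → ℤ) (D A : ℤ)
    (hA : 0 < A)
    (Δtil : ℕ → ℤ) (hΔtil0 : Δtil 0 = 0)
    (hstep : ∀ n < N, (j n, Δtil (n + 1)) = ds (i n) D A (κ n) (Δtil n)) :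
    (∀ k : ℤ, |(∑ n ∈ Finset.range N, j n) * A - (∑ n ∈ Finset.range N, i n) * D| ≤
      |k * A - (∑ n ∈ Finset.range N, i n) * D|) ∧
    Δtil N = (∑ n ∈ Finset.range N, j n) * A - (∑ n ∈ Finset.range N, i n) * D := by
  have hΔN := ds_chain_eq_sum hΔtil0 hstep N le_rfl
  refine ⟨fun k => ?_, hΔN⟩
  obtain ⟨M, rfl⟩ : ∃ M, N = M + 1 := ⟨N - 1, by omega⟩
  have hbound : 2 * |Δtil (M + 1)| ≤ A := by
    have hlast : Δtil (M + 1) = (ds (i M) D A (κ M) (Δtil M)).2 :=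
      congrArg Prod.snd (hstep M M.lt_succ_self)
    exact hlast ▸ two_mul_abs_ds_snd_le _ _ _ _ _ hA
  have hmin := abs_le_abs_add_mul_of_two_mul_abs_le hbound (k - ∑ n ∈ Finset.range (M + 1), j n)
  rw [hΔN] at hmin
  convert hmin using 2
  ring

theorem stmt_11 (N : ℕ) (hN : 1 ≤ N) (i κ j : ℕ → ℤ) (D A : ℤ)
    (hi : ∀ n, 0 ≤ i n) (hD : 0 ≤ D) (hA : 0 < A)
    (Δtil : ℕ → ℤ) (hΔtil0 : Δtil 0 = 0)
    (hstep : ∀ n < N, (j n, Δtil (n + 1)) = ds (i n) D A (κ n) (Δtil n)) :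
    (∀ k : ℤ, |(∑ n ∈ Finset.range N, j n) * A - (∑ n ∈ Finset.range N, i n) * D| ≤
      |k * A - (∑ n ∈ Finset.range N, i n) * D|) ∧
    Δtil N = (∑ n ∈ Finset.range N, j n) * A - (∑ n ∈ Finset.range N, i n) * D :=
  stmt_11_general N hN i κ j D A hA Δtil hΔtil0 hstep
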